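/- arXiv:1706.02164 — 9 statements merged into one kernel-verified Lean document; each statement's English description precedes it below -/
import Mathlib

section
/- Let (X, U) be a uniform space and let C(U) := ⋂_{V ∈ U} C⟨{V}⟩ be the intersection over all uniform entourages V of the coarse structures generated by V. If C(U) is compatible with U (i.e., there exists an entourage that is both in C(U) and in U), then every uniformly excisive decomposition (A, B) of X (with A ∪ B = X) is coarsely excisive for the coarse structure C(U): for every W ∈ C(U) there exists W' ∈ C(U) such that W[A] ∩ W[B] ⊆ W'[A ∩ B]. -/
/-- `W[S] = {x | ∃ s ∈ S, (x,s) ∈ W}`. -/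
def relImage {α : Type*} (W : Set (α × α)) (S : Set α) : Set α := {x | ∃ s ∈ S, (x, s) ∈ W}

/-- Symmetrization of an entourage together with the diagonal. -/
def symmClose {α : Type*} (V : Set (α × α)) : Set (α × α) :=
  V ∪ (Prod.swap '' V) ∪ Set.diagonal α

/-- Finite compositions of an entourage. -/
def relPow {α : Type*} (V : Set (α × α)) : ℕ → Set (α × α)
  | 0 => Set.diagonal α
  | n + 1 => SetRel.comp (relPow V n) V

/-- `W` belongs to the coarse structure `C⟨{V}⟩` generated by the single entourage `V`:
it is contained in some finite composition of `V ∪ V⁻¹ ∪ diag`. -/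
def inCoarseGen {α : Type*} (V W : Set (α × α)) : Prop := ∃ n, W ⊆ relPow (symmClose V) n

/-- Membership in `C(𝒰) = ⋂_{V ∈ 𝒰} C⟨{V}⟩`, the intersection over all uniform entourages
`V` of the coarse structures generated by `V`. -/
def memCU (X : Type*) [UniformSpace X] (W : Set (X × X)) : Prop :=
  ∀ V ∈ uniformity X, inCoarseGen V W

/-!
Fix a compatible `U ∈ C(𝒰) ∩ 𝒰` and, by admissibility of `κ`, a uniform `W₁ ⊆ U₀` with
`κ W₁ ⊆ U`. A given `W ∈ C(𝒰)` lies in some power `Tⁿ` of the uniform entourage `T = W₁ ∩ U`.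
If `x` is `Tⁿ`-close to both `A` and `B`, walking along a `T`-chain from a point of `A` to a
point of `B` (all points lie in `A ∪ B`) one meets a point `y` that is `T`-close to both `A`
and `B`, so `y ∈ κ(T)[A ∩ B] ⊆ κ(W₁)[A ∩ B] ⊆ U[A ∩ B]`. Hence `x ∈ Uⁿ⁺¹[A ∩ B]`, and
`Uⁿ⁺¹ ∈ C(𝒰)`.
-/

open SetRel

section Relations

variable {α : Type*}

lemma relImage_mono {W W' : Set (α × α)} {S S' : Set α} (hW : W ⊆ W') (hS : S ⊆ S') :
    relImage W S ⊆ relImage W' S' :=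
  fun _ ⟨s, hs, hxs⟩ => ⟨s, hS hs, hW hxs⟩

lemma relImage_relImage_subset (R S : Set (α × α)) (s : Set α) :
    relImage R (relImage S s) ⊆ relImage (R ○ S) s :=
  fun _ ⟨_, ⟨t, ht, hyt⟩, hxy⟩ => ⟨t, ht, _, hxy, hyt⟩

lemma relPow_mono {S T : Set (α × α)} (h : S ⊆ T) : ∀ n, relPow S n ⊆ relPow T n
  | 0 => subset_rfl
  | n + 1 => comp_subset_comp (relPow_mono h n) h

lemma relPow_add (S : Set (α × α)) (m : ℕ) : ∀ n, relPow S (m + n) = relPow S m ○ relPow S n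
  | 0 => (comp_id _).symm
  | n + 1 => by
    rw [← Nat.add_assoc, relPow, relPow, relPow_add S m n, comp_assoc]

lemma relPow_subset_succ (S : SetRel α α) [S.IsRefl] (n : ℕ) : relPow S n ⊆ relPow S (n + 1) :=
  left_subset_comp

lemma symmClose_symmetrize_subset (T : SetRel α α) [T.IsRefl] : symmClose T.symmetrize ⊆ T := by
  rintro ⟨a, b⟩ ((hab | ⟨⟨c, d⟩, hcd, hswap⟩) | hab)
  · exact hab.1
  · cases hswap
    exact hcd.2
  · exact (show a = b from hab) ▸ T.rfl

variable {A B : Set α} {S : SetRel α α} [S.IsRefl]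

lemma mem_relImage_relPow_inter_of_mem (hAB : A ∪ B = Set.univ) {x : α} (hx : x ∈ A) :
    ∀ n, x ∈ relImage (relPow S n) B →
      x ∈ relImage (relPow S n) (relImage S A ∩ relImage S B)
  | 0, ⟨b, hb, hxb⟩ => by
    obtain rfl : x = b := hxb
    exact ⟨x, ⟨⟨x, hx, S.rfl⟩, ⟨x, hb, S.rfl⟩⟩, rfl⟩
  | n + 1, ⟨b, hb, c, hxc, hcb⟩ => by
    rcases (Set.eq_univ_iff_forall.1 hAB c) with hcA | hcB
    · exact ⟨c, ⟨⟨c, hcA, S.rfl⟩, ⟨b, hb, hcb⟩⟩, relPow_subset_succ S n hxc⟩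
    · obtain ⟨y, hy, hxy⟩ := mem_relImage_relPow_inter_of_mem hAB hx n ⟨c, hcB, hxc⟩
      exact ⟨y, hy, relPow_subset_succ S n hxy⟩

lemma relImage_relPow_inter_subset (hAB : A ∪ B = Set.univ) (n : ℕ) :
    relImage (relPow S n) A ∩ relImage (relPow S n) B ⊆
      relImage (relPow S n) (relImage S A ∩ relImage S B) := by
  rintro x ⟨hxA, hxB⟩
  rcases (Set.eq_univ_iff_forall.1 hAB x) with hx | hx
  · exact mem_relImage_relPow_inter_of_mem hAB hx n hxB
  · rw [Set.inter_comm]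
    exact mem_relImage_relPow_inter_of_mem ((Set.union_comm B A).trans hAB) hx n hxA

end Relations

section CoarseStructure

variable {α : Type*} {V P Q : Set (α × α)}

lemma inCoarseGen_comp (hP : inCoarseGen V P) (hQ : inCoarseGen V Q) : inCoarseGen V (P ○ Q) := by
  obtain ⟨m, hm⟩ := hP
  obtain ⟨n, hn⟩ := hQ
  exact ⟨m + n, (relPow_add _ m n).symm ▸ comp_subset_comp hm hn⟩

variable {X : Type*} [UniformSpace X] {W : Set (X × X)}

lemma memCU_relPow (hW : memCU X W) : ∀ n, memCU X (relPow W n)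
  | 0 => fun _ _ => ⟨0, subset_rfl⟩
  | n + 1 => fun V hV => inCoarseGen_comp (memCU_relPow hW n V hV) (hW V hV)

lemma memCU.exists_subset_relPow (hW : memCU X W) {T : Set (X × X)} (hT : T ∈ uniformity X) :
    ∃ n, W ⊆ relPow T n := by
  have := isRefl_of_mem_uniformity hT
  obtain ⟨n, hn⟩ := hW _ (symmetrize_mem_uniformity hT)
  exact ⟨n, hn.trans (relPow_mono (symmClose_symmetrize_subset T) n)⟩

end CoarseStructure

/-- If `C(𝒰)` is compatible with the uniform structure, then every uniformly excisive
decomposition `(A,B)` of `X` is coarsely excisive for the coarse structure `C(𝒰)`. -/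
theorem stmt0 {X : Type*} [UniformSpace X] (A B : Set X) (hAB : A ∪ B = Set.univ)
    (hcompat : ∃ U : Set (X × X), memCU X U ∧ U ∈ uniformity X)
    (hexc : ∃ U₀ ∈ uniformity X, ∃ κ : Set (X × X) → Set (X × X),
      (∀ W W' : Set (X × X), W ⊆ W' → W' ⊆ U₀ → κ W ⊆ κ W') ∧
      (∀ V ∈ uniformity X, ∃ W ∈ uniformity X, W ⊆ U₀ ∧ κ W ⊆ V) ∧
      (∀ W : Set (X × X), W ⊆ U₀ →
        relImage W A ∩ relImage W B ⊆ relImage (κ W) (A ∩ B))) :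
    ∀ W : Set (X × X), memCU X W →
      ∃ W' : Set (X × X), memCU X W' ∧
        relImage W A ∩ relImage W B ⊆ relImage W' (A ∩ B) := by
  obtain ⟨U, hUC, hU⟩ := hcompat
  obtain ⟨U₀, -, κ, hκmono, hκadm, hκexc⟩ := hexc
  intro W hW
  obtain ⟨W₁, hW₁, hW₁U₀, hκW₁⟩ := hκadm U hU
  have hT : W₁ ∩ U ∈ uniformity X := Filter.inter_mem hW₁ hU
  have := isRefl_of_mem_uniformity hT
  obtain ⟨n, hWT⟩ := hW.exists_subset_relPow hT
  have hnear : relImage (W₁ ∩ U) A ∩ relImage (W₁ ∩ U) B ⊆ relImage U (A ∩ B) :=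
    (hκexc _ (Set.inter_subset_left.trans hW₁U₀)).trans <|
      relImage_mono ((hκmono _ _ Set.inter_subset_left hW₁U₀).trans hκW₁) subset_rfl
  refine ⟨relPow U (n + 1), memCU_relPow hUC _, ?_⟩
  calc relImage W A ∩ relImage W B
      ⊆ relImage (relPow (W₁ ∩ U) n) A ∩ relImage (relPow (W₁ ∩ U) n) B :=
        Set.inter_subset_inter (relImage_mono hWT subset_rfl) (relImage_mono hWT subset_rfl)
    _ ⊆ relImage (relPow (W₁ ∩ U) n) (relImage U (A ∩ B)) :=
        (relImage_relPow_inter_subset hAB n).trans (relImage_mono subset_rfl hnear)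
    _ ⊆ relImage (relPow U (n + 1)) (A ∩ B) :=
        (relImage_relImage_subset _ _ _).trans <|
          relImage_mono (comp_subset_comp_left (relPow_mono Set.inter_subset_right n)) subset_rfl
end

section
/- Let X = {0} ∪ {1/n : n ∈ ℕ, n ≥ 1} with the metric induced from ℝ, and let U be the metric uniform structure on X generated by the entourages U_r = {(x,y) ∈ X × X : |x − y| < r} for r > 0. Then the coarse structure C(U) := ⋂_{r>0} C⟨{U_r}⟩ equals the minimal coarse structure C⟨{diag_X}⟩ generated by the diagonal; in particular, C(U) is not compatible with U (no entourage is both in C(U) and in U). -/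
/-- The space `X = {0} ∪ {1/n : n ≥ 1} ⊆ ℝ`. -/
def XSet : Set ℝ := {x | x = 0 ∨ ∃ n : ℕ, x = 1 / (n + 1)}

/-- The metric entourage `U_r = {(x,y) : |x − y| < r}` on `X`. -/
def Ur (r : ℝ) : Set (↥XSet × ↥XSet) := {p | dist p.1 p.2 < r}

/-- Membership in `C(𝒰) = ⋂_{r > 0} C⟨{U_r}⟩`. -/
def memCU' (W : Set (↥XSet × ↥XSet)) : Prop := ∀ r : ℝ, 0 < r → inCoarseGen (Ur r) W

section CoarseGen

variable {α : Type*} {V : Set (α × α)} {S : Set α}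

theorem inCoarseGen_of_subset_diagonal {W : Set (α × α)} (hW : W ⊆ Set.diagonal α) :
    inCoarseGen V W :=
  ⟨0, hW⟩

theorem mem_iff_mem_of_mem_symmClose (hV : ∀ p ∈ V, p.1 ∈ S ↔ p.2 ∈ S) {a b : α}
    (h : (a, b) ∈ symmClose V) : a ∈ S ↔ b ∈ S := by
  rcases h with (h | ⟨⟨b', a'⟩, hp, hswap⟩) | h
  · exact hV _ h
  · obtain ⟨rfl, rfl⟩ := Prod.ext_iff.1 hswap
    exact (hV _ hp).symm
  · rw [show a = b from h]

theorem mem_iff_mem_of_mem_relPow (hV : ∀ p ∈ V, p.1 ∈ S ↔ p.2 ∈ S) :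
    ∀ {n : ℕ} {a b : α}, (a, b) ∈ relPow (symmClose V) n → (a ∈ S ↔ b ∈ S)
  | 0, _, _, rfl => Iff.rfl
  | _ + 1, _, _, ⟨_, hac, hcb⟩ =>
    (mem_iff_mem_of_mem_relPow hV hac).trans (mem_iff_mem_of_mem_symmClose hV hcb)

end CoarseGen

theorem eq_iff_eq_of_dist_lt {α : Type*} [PseudoMetricSpace α] {r : ℝ} {x a b : α}
    (hx : ∀ z, dist z x < r → z = x) (hab : dist a b < r) : a = x ↔ b = x := by
  constructor
  · rintro rfl
    exact hx b (by rwa [dist_comm])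
  · rintro rfl
    exact hx a hab

theorem one_div_mul_le_one_div_sub_one_div {j l : ℕ} (hjl : j < l) :
    1 / (((j : ℝ) + 1) * ((j : ℝ) + 2)) ≤ 1 / ((j : ℝ) + 1) - 1 / ((l : ℝ) + 1) := by
  have hl : (j : ℝ) + 2 ≤ (l : ℝ) + 1 := by
    have : (j : ℝ) + 1 ≤ l := by exact_mod_cast hjl
    linarith
  have hgap : 1 / ((j : ℝ) + 1) - 1 / ((j : ℝ) + 2) = 1 / (((j : ℝ) + 1) * ((j : ℝ) + 2)) := by
    field_simp
    ring
  have : 1 / ((l : ℝ) + 1) ≤ 1 / ((j : ℝ) + 2) := one_div_le_one_div_of_le (by positivity) hl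
  linarith

theorem one_div_mul_le_abs_sub {k m : ℕ} (hmk : m ≠ k) :
    1 / (((k : ℝ) + 1) * ((k : ℝ) + 2)) ≤ |1 / ((m : ℝ) + 1) - 1 / ((k : ℝ) + 1)| := by
  rcases hmk.lt_or_gt with hlt | hgt
  · calc 1 / (((k : ℝ) + 1) * ((k : ℝ) + 2))
        ≤ 1 / (((m : ℝ) + 1) * ((m : ℝ) + 2)) := by gcongr
      _ ≤ 1 / ((m : ℝ) + 1) - 1 / ((k : ℝ) + 1) := one_div_mul_le_one_div_sub_one_div hlt
      _ ≤ _ := le_abs_self _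
  · rw [abs_sub_comm]
    exact (one_div_mul_le_one_div_sub_one_div hgt).trans (le_abs_self _)

namespace XSet

noncomputable def zero : ↥XSet := ⟨0, Or.inl rfl⟩

noncomputable def invSucc (k : ℕ) : ↥XSet := ⟨1 / ((k : ℝ) + 1), Or.inr ⟨k, rfl⟩⟩

theorem eq_zero_or_exists_eq_invSucc (x : ↥XSet) : x = zero ∨ ∃ k, x = invSucc k := by
  rcases x with ⟨x, rfl | ⟨k, rfl⟩⟩
  · exact Or.inl rfl
  · exact Or.inr ⟨k, rfl⟩

theorem eq_invSucc_of_dist_lt (k : ℕ) (z : ↥XSet)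
    (hz : dist z (invSucc k) < 1 / (((k : ℝ) + 1) * ((k : ℝ) + 2))) : z = invSucc k := by
  rw [Subtype.dist_eq, Real.dist_eq] at hz
  rcases eq_zero_or_exists_eq_invSucc z with rfl | ⟨m, rfl⟩
  · refine absurd hz (not_lt.2 ?_)
    have : 1 / (((k : ℝ) + 1) * ((k : ℝ) + 2)) ≤ 1 / ((k : ℝ) + 1) :=
      one_div_le_one_div_of_le (by positivity) (by nlinarith)
    simpa [zero, invSucc, abs_of_pos (by positivity : (0 : ℝ) < k + 1)] using this
  · by_contra hne
    exact absurd hz (not_lt.2 (one_div_mul_le_abs_sub fun h => hne (h ▸ rfl)))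

theorem subset_diagonal_of_memCU' {W : Set (↥XSet × ↥XSet)} (hW : memCU' W) :
    W ⊆ Set.diagonal ↥XSet := by
  rintro ⟨a, b⟩ hab
  by_contra hne
  have hk : ∃ k, a = invSucc k ∨ b = invSucc k := by
    rcases eq_zero_or_exists_eq_invSucc a with rfl | ⟨k, rfl⟩
    · rcases eq_zero_or_exists_eq_invSucc b with rfl | ⟨k, rfl⟩
      · exact absurd rfl hne
      · exact ⟨k, Or.inr rfl⟩
    · exact ⟨k, Or.inl rfl⟩
  obtain ⟨k, hk⟩ := hk
  obtain ⟨n, hn⟩ := hW _ (by positivity : (0 : ℝ) < 1 / (((k : ℝ) + 1) * ((k : ℝ) + 2)))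
  have hiff : a = invSucc k ↔ b = invSucc k :=
    mem_iff_mem_of_mem_relPow (S := {invSucc k})
      (fun _ hp => eq_iff_eq_of_dist_lt (eq_invSucc_of_dist_lt k) hp) (hn hab)
  rcases hk with ha | hb
  · exact hne (ha.trans (hiff.1 ha).symm)
  · exact hne ((hiff.2 hb).trans hb.symm)

theorem diagonal_notMem_uniformity : Set.diagonal ↥XSet ∉ uniformity ↥XSet := by
  intro hdiag
  obtain ⟨ε, hε, hball⟩ := Metric.mem_uniformity_dist.1 hdiag
  obtain ⟨n, hn⟩ := exists_nat_one_div_lt hε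
  have hdist : dist zero (invSucc n) < ε := by
    simpa [Subtype.dist_eq, zero, invSucc, abs_of_pos (by positivity : (0 : ℝ) < n + 1)]
      using hn
  have : (0 : ℝ) = 1 / ((n : ℝ) + 1) := congrArg Subtype.val (hball hdist)
  exact absurd this (ne_of_lt Nat.one_div_pos_of_nat)

end XSet

/-- For `X = {0} ∪ {1/n}` with the metric uniform structure, the coarse structure
`C(𝒰) = ⋂_{r>0} C⟨{U_r}⟩` equals the minimal coarse structure generated by the diagonal;
in particular no entourage is both in `C(𝒰)` and uniform. -/
theorem stmt1 :
    (∀ W : Set (↥XSet × ↥XSet), memCU' W ↔ W ⊆ Set.diagonal ↥XSet) ∧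
    ¬ ∃ U : Set (↥XSet × ↥XSet), memCU' U ∧ U ∈ uniformity ↥XSet := by
  have hCU : ∀ W : Set (↥XSet × ↥XSet), memCU' W ↔ W ⊆ Set.diagonal ↥XSet := fun _ =>
    ⟨XSet.subset_diagonal_of_memCU', fun hW _ _ => inCoarseGen_of_subset_diagonal hW⟩
  refine ⟨hCU, ?_⟩
  rintro ⟨U, hUC, hU⟩
  exact XSet.diagonal_notMem_uniformity (Filter.mem_of_superset hU ((hCU U).1 hUC))
end

section
/- Let X be a set with a coarse structure C and a uniform structure U that are compatible. Let (A, B) be a uniformly excisive decomposition of (X, U) witnessed by an entourage U₀ ∈ C ∩ U and a function κ taking values in C. Then for every coarse entourage V ∈ C with V ⊆ U₀ⁿ for some n ∈ ℕ, one has V[A] ∩ V[B] ⊆ (U₀^{2n+1} ∘ κ(U₀))[A ∩ B]. -/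
/-! Every point `z` of `V[A] ∩ V[B]` lies in `A` or in `B` and is joined by a `U₀`-chain of
length `n` to a point of the other set. Along that chain some `U₀`-step leaves the first set,
and its initial point lies in `U₀[A] ∩ U₀[B]`, at `U₀`-distance at most `n` from `z`.
Excision for `W = U₀` then moves it into `A ∩ B` by a `κ(U₀)`-step. -/

section RelPow

variable {X : Type*} {W : Set (X × X)}

lemma relPow_monotone (hW : Set.diagonal X ⊆ W) : Monotone (relPow W) :=
  monotone_nat_of_le_succ fun _ ⟨_, y⟩ hxy => ⟨y, hxy, hW rfl⟩

lemma exists_relPow_mem_relImage_inter (hW : Set.diagonal X ⊆ W) {S T : Set X}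
    (hST : S ∪ T = Set.univ) {x : X} (hx : x ∈ S) :
    ∀ {m : ℕ} {y : X}, (x, y) ∈ relPow W m → y ∈ T →
      ∃ u, (x, u) ∈ relPow W m ∧ u ∈ relImage W S ∩ relImage W T
  | 0, y, (hxy : x = y), hy => ⟨x, rfl, ⟨x, hx, hW rfl⟩, ⟨x, hxy ▸ hy, hW rfl⟩⟩
  | m + 1, y, ⟨v, hxv, hvy⟩, hy => by
    by_cases hvT : v ∈ T
    · obtain ⟨u, hxu, hu⟩ := exists_relPow_mem_relImage_inter hW hST hx hxv hvT
      exact ⟨u, relPow_monotone hW m.le_succ hxu, hu⟩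
    · have hvS : v ∈ S := (hST ▸ Set.mem_univ v : v ∈ S ∪ T).resolve_right hvT
      exact ⟨v, relPow_monotone hW m.le_succ hxv, ⟨v, hvS, hW rfl⟩, ⟨y, hy, hvy⟩⟩

end RelPow

/-- Key combinatorial estimate for uniformly excisive decompositions: if `(A,B)` covers `X`,
`U₀` contains the diagonal, and `κ` is an excision function for `(A,B)` below `U₀`, then for
every `V ⊆ U₀ⁿ` one has `V[A] ∩ V[B] ⊆ (U₀^{2n+1} ∘ κ(U₀))[A ∩ B]`. -/
theorem stmt3 {X : Type*} (A B : Set X) (hAB : A ∪ B = Set.univ)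
    (U₀ : Set (X × X)) (hdiag : Set.diagonal X ⊆ U₀)
    (κ : Set (X × X) → Set (X × X))
    (hκ : ∀ W : Set (X × X), W ⊆ U₀ →
      relImage W A ∩ relImage W B ⊆ relImage (κ W) (A ∩ B))
    (V : Set (X × X)) (n : ℕ) (hV : V ⊆ relPow U₀ n) :
    relImage V A ∩ relImage V B ⊆
      relImage (SetRel.comp (relPow U₀ (2 * n + 1)) (κ U₀)) (A ∩ B) := by
  rintro z ⟨⟨a, ha, hza⟩, ⟨b, hb, hzb⟩⟩
  obtain ⟨w, hzw, hw⟩ : ∃ w, (z, w) ∈ relPow U₀ n ∧ w ∈ relImage U₀ A ∩ relImage U₀ B := by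
    rcases (hAB ▸ Set.mem_univ z : z ∈ A ∪ B) with hzA | hzB
    · exact exists_relPow_mem_relImage_inter hdiag hAB hzA (hV hzb) hb
    · obtain ⟨w, hzw, hw⟩ :=
        exists_relPow_mem_relImage_inter hdiag (Set.union_comm A B ▸ hAB) hzB (hV hza) ha
      exact ⟨w, hzw, Set.inter_comm _ _ ▸ hw⟩
  obtain ⟨p, hp, hwp⟩ := hκ U₀ subset_rfl hw
  exact ⟨p, hp, w, relPow_monotone hdiag (by omega) hzw, hwp⟩
end

section
/- Let X be a finite-dimensional simplicial complex equipped with the path metric induced by the spherical metric on its simplices. Then the family of barycentric coordinate functions (χ_v)_{v ∈ X⁽⁰⁾}, indexed by the vertices of X, is a partition of unity on X that is (1) uniformly point-wise locally finite with sup_{x ∈ X} |{v : χ_v(x) ≠ 0}| ≤ dim(X) + 1, (2) equicontinuous (for every ε > 0 there is δ > 0 such that d(x,x') ≤ δ implies |χ_v(x) − χ_v(x')| ≤ ε for all vertices v simultaneously), and (3) each support supp(χ_v) is bounded with respect to the entourage U₂ of width 2 (i.e., contained in the ball of radius 2 around v). -/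
/-!
Map a point `x` of a simplex to the unit vector `(√(x v))_v`; the spherical distance of two
points is the angle `θ` between these vectors. Since `2 - 2 cos θ ≤ θ²`, each coordinate of the
unit vectors moves by at most `θ`, so each barycentric coordinate moves by at most `2θ`. Summing
along a chain shows that every `χ_v` is `2`-Lipschitz for the path metric, which gives
equicontinuity. The vectors have nonnegative entries, so `θ ≤ π/2 < 2`, and a point with
`χ_v(x) ≠ 0` lies in a simplex together with `v`.
-/

open scoped ENNReal

/-- A point of the geometric realization of the simplicial complex `K` on the vertex set `V`:
barycentric coordinates forming a probability distribution supported on a face of `K`. -/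
structure SPoint {V : Type*} (K : Set (Finset V)) where
  f : V →₀ ℝ
  nonneg : ∀ v, 0 ≤ f v
  sum_one : (f.support.sum fun v => f v) = 1
  mem : f.support ∈ K

/-- The spherical distance between two points of a common simplex: map barycentric coordinates
to the unit sphere via coordinatewise square roots and take the round distance. -/
noncomputable def sphDist {V : Type*} [DecidableEq V] {K : Set (Finset V)}
    (x y : SPoint K) : ℝ :=
  Real.arccos ((x.f.support ∪ y.f.support).sum fun v => Real.sqrt (x.f v) * Real.sqrt (y.f v))

/-- The spherical path (quasi-)metric on the realization of `K`: the infimum of lengths of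
chains whose consecutive members lie in a common simplex. -/
noncomputable def pathDist {V : Type*} [DecidableEq V] {K : Set (Finset V)}
    (x y : SPoint K) : ℝ≥0∞ :=
  sInf { L | ∃ (k : ℕ) (c : ℕ → SPoint K), c 0 = x ∧ c k = y ∧
    (∀ i < k, ((c i).f.support ∪ (c (i + 1)).f.support) ∈ K) ∧
    L = ∑ i ∈ Finset.range k, ENNReal.ofReal (sphDist (c i) (c (i + 1))) }

/-- The vertex `v` regarded as a point of the realization. -/
noncomputable def vertexPoint {V : Type*} [DecidableEq V] {K : Set (Finset V)} (v : V)
    (hv : ({v} : Finset V) ∈ K) : SPoint K where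
  f := Finsupp.single v 1
  nonneg := fun w => by
    rw [Finsupp.single_apply]
    split <;> norm_num
  sum_one := by
    rw [Finsupp.support_single_ne_zero v one_ne_zero]
    simp
  mem := by
    rw [Finsupp.support_single_ne_zero v one_ne_zero]
    exact hv

open Finset

section SqrtCoordinates

variable {ι : Type*} {s : Finset ι} {f g : ι → ℝ}

theorem sum_sq_sqrt_sub_sqrt (hf : ∀ i ∈ s, 0 ≤ f i) (hg : ∀ i ∈ s, 0 ≤ g i)
    (hfs : ∑ i ∈ s, f i = 1) (hgs : ∑ i ∈ s, g i = 1) :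
    ∑ i ∈ s, (√(f i) - √(g i)) ^ 2 = 2 - 2 * ∑ i ∈ s, √(f i) * √(g i) := by
  have hterm : ∀ i ∈ s, (√(f i) - √(g i)) ^ 2 = f i + g i - 2 * (√(f i) * √(g i)) := by
    intro i hi
    rw [sub_sq, Real.sq_sqrt (hf i hi), Real.sq_sqrt (hg i hi)]
    ring
  rw [sum_congr rfl hterm, sum_sub_distrib, sum_add_distrib, hfs, hgs, ← mul_sum]
  ring

theorem two_sub_two_mul_le_sq_arccos {t : ℝ} (ht : -1 ≤ t) (ht' : t ≤ 1) :
    2 - 2 * t ≤ Real.arccos t ^ 2 := by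
  have h := Real.one_sub_sq_div_two_le_cos (x := Real.arccos t)
  rw [Real.cos_arccos ht ht'] at h
  linarith

theorem abs_sub_le_two_mul_abs_sqrt_sub {a b : ℝ} (ha : 0 ≤ a) (hb : 0 ≤ b)
    (ha' : a ≤ 1) (hb' : b ≤ 1) : |a - b| ≤ 2 * |√a - √b| := by
  have hfactor : a - b = (√a - √b) * (√a + √b) := by
    rw [mul_comm, ← sq_sub_sq, Real.sq_sqrt ha, Real.sq_sqrt hb]
  have hsum : √a + √b ≤ 2 := by
    linarith [Real.sqrt_le_one.mpr ha', Real.sqrt_le_one.mpr hb']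
  rw [hfactor, abs_mul, abs_of_nonneg (by positivity : 0 ≤ √a + √b), mul_comm]
  exact mul_le_mul_of_nonneg_right hsum (abs_nonneg _)

theorem abs_sub_le_two_mul_arccos_sum_sqrt_mul (hf : ∀ i ∈ s, 0 ≤ f i)
    (hg : ∀ i ∈ s, 0 ≤ g i) (hfs : ∑ i ∈ s, f i = 1) (hgs : ∑ i ∈ s, g i = 1)
    {i : ι} (hi : i ∈ s) :
    |f i - g i| ≤ 2 * Real.arccos (∑ j ∈ s, √(f j) * √(g j)) := by
  set t := ∑ j ∈ s, √(f j) * √(g j)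
  have hsq := sum_sq_sqrt_sub_sqrt hf hg hfs hgs
  have ht_nonneg : 0 ≤ t := sum_nonneg fun j _ => by positivity
  have ht_le_one : t ≤ 1 := by
    linarith [sum_nonneg fun j (_ : j ∈ s) => sq_nonneg (√(f j) - √(g j))]
  have hsqrt : |√(f i) - √(g i)| ≤ Real.arccos t := by
    refine abs_le_of_sq_le_sq ?_ (Real.arccos_nonneg t)
    calc (√(f i) - √(g i)) ^ 2 ≤ ∑ j ∈ s, (√(f j) - √(g j)) ^ 2 :=
          single_le_sum (f := fun j => (√(f j) - √(g j)) ^ 2) (fun j _ => sq_nonneg _) hi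
      _ = 2 - 2 * t := hsq
      _ ≤ Real.arccos t ^ 2 := two_sub_two_mul_le_sq_arccos (by linarith) ht_le_one
  have hfi : f i ≤ 1 := hfs ▸ single_le_sum hf hi
  have hgi : g i ≤ 1 := hgs ▸ single_le_sum hg hi
  calc |f i - g i| ≤ 2 * |√(f i) - √(g i)| :=
        abs_sub_le_two_mul_abs_sqrt_sub (hf i hi) (hg i hi) hfi hgi
    _ ≤ 2 * Real.arccos t := by linarith

end SqrtCoordinates

namespace SPoint

variable {V : Type*} {K : Set (Finset V)}

theorem sum_eq_one_of_support_subset (x : SPoint K) {s : Finset V} (h : x.f.support ⊆ s) :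
    ∑ v ∈ s, x.f v = 1 := by
  rw [← x.sum_one]
  exact (sum_subset h fun v _ hv => Finsupp.notMem_support_iff.mp hv).symm

variable [DecidableEq V]

theorem sphDist_nonneg (x y : SPoint K) : 0 ≤ sphDist x y :=
  Real.arccos_nonneg _

theorem sphDist_le_two (x y : SPoint K) : sphDist x y ≤ 2 := by
  have h : sphDist x y ≤ Real.pi / 2 :=
    Real.arccos_le_pi_div_two.mpr (sum_nonneg fun v _ => by positivity)
  linarith [Real.pi_le_four]

theorem abs_sub_le_two_mul_sphDist (x y : SPoint K) (v : V) :
    |x.f v - y.f v| ≤ 2 * sphDist x y := by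
  by_cases hv : v ∈ x.f.support ∪ y.f.support
  · exact abs_sub_le_two_mul_arccos_sum_sqrt_mul (fun w _ => x.nonneg w) (fun w _ => y.nonneg w)
      (x.sum_eq_one_of_support_subset subset_union_left)
      (y.sum_eq_one_of_support_subset subset_union_right) hv
  · rw [mem_union, Finsupp.mem_support_iff, Finsupp.mem_support_iff, not_or, not_not,
      not_not] at hv
    rw [hv.1, hv.2, sub_self, abs_zero]
    exact mul_nonneg zero_le_two (sphDist_nonneg x y)

theorem pathDist_le_sphDist {x y : SPoint K} (h : x.f.support ∪ y.f.support ∈ K) :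
    pathDist x y ≤ ENNReal.ofReal (sphDist x y) := by
  refine sInf_le ⟨1, fun i => if i = 0 then x else y, rfl, rfl, ?_, by simp⟩
  intro i hi
  obtain rfl : i = 0 := Nat.lt_one_iff.mp hi
  exact h

theorem ofReal_abs_sub_le_two_mul_pathDist (x y : SPoint K) (v : V) :
    ENNReal.ofReal |x.f v - y.f v| ≤ 2 * pathDist x y := by
  simp_rw [pathDist, sInf_eq_iInf, ENNReal.mul_iInf_of_ne two_ne_zero ENNReal.ofNat_ne_top]
  refine le_iInf₂ fun L ⟨k, c, hc0, hck, _, hL⟩ => ?_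
  subst hc0 hck hL
  rw [← ENNReal.ofReal_sum_of_nonneg fun i _ => sphDist_nonneg _ _, ← ENNReal.ofReal_ofNat 2,
    ← ENNReal.ofReal_mul zero_le_two, mul_sum]
  refine ENNReal.ofReal_le_ofReal ?_
  calc |(c 0).f v - (c k).f v| ≤ ∑ i ∈ range k, |(c i).f v - (c (i + 1)).f v| := by
        simpa only [Real.dist_eq] using dist_le_range_sum_dist (fun i => (c i).f v) k
    _ ≤ ∑ i ∈ range k, 2 * sphDist (c i) (c (i + 1)) :=
        sum_le_sum fun i _ => abs_sub_le_two_mul_sphDist _ _ v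

theorem support_vertexPoint (v : V) (hv : ({v} : Finset V) ∈ K) :
    (vertexPoint v hv).f.support = {v} := by
  simp [vertexPoint]

theorem pathDist_vertexPoint_le_two {v : V} (hv : ({v} : Finset V) ∈ K) {x : SPoint K}
    (hx : x.f v ≠ 0) : pathDist x (vertexPoint v hv) ≤ ENNReal.ofReal 2 := by
  have hunion : x.f.support ∪ (vertexPoint v hv).f.support = x.f.support := by
    rw [support_vertexPoint, union_singleton, insert_eq_of_mem (Finsupp.mem_support_iff.mpr hx)]
  calc pathDist x (vertexPoint v hv) ≤ ENNReal.ofReal (sphDist x (vertexPoint v hv)) :=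
        pathDist_le_sphDist (by rw [hunion]; exact x.mem)
    _ ≤ ENNReal.ofReal 2 := ENNReal.ofReal_le_ofReal (sphDist_le_two _ _)

end SPoint

theorem stmt4_general {V : Type*} [DecidableEq V] (K : Set (Finset V)) (n : ℕ)
    (hdim : ∀ s ∈ K, s.card ≤ n + 1) :
    (∀ x : SPoint K,
      (x.f.support.sum fun v => x.f v) = 1 ∧ x.f.support.card ≤ n + 1) ∧
    (∀ ε : ℝ, 0 < ε → ∃ δ : ℝ, 0 < δ ∧ ∀ x y : SPoint K,
      pathDist x y ≤ ENNReal.ofReal δ → ∀ v : V, |x.f v - y.f v| ≤ ε) ∧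
    (∀ (v : V) (hv : ({v} : Finset V) ∈ K) (x : SPoint K), x.f v ≠ 0 →
      pathDist x (vertexPoint v hv) ≤ ENNReal.ofReal 2) := by
  refine ⟨fun x => ⟨x.sum_one, hdim _ x.mem⟩, fun ε hε => ⟨ε / 2, by positivity, ?_⟩,
    fun v hv x hx => SPoint.pathDist_vertexPoint_le_two hv hx⟩
  intro x y hxy v
  rw [← ENNReal.ofReal_le_ofReal_iff hε.le]
  calc ENNReal.ofReal |x.f v - y.f v| ≤ 2 * pathDist x y :=
        SPoint.ofReal_abs_sub_le_two_mul_pathDist x y v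
    _ ≤ 2 * ENNReal.ofReal (ε / 2) := by gcongr
    _ = ENNReal.ofReal ε := by
        rw [← ENNReal.ofReal_ofNat 2, ← ENNReal.ofReal_mul zero_le_two]
        ring_nf

/-- For a finite-dimensional simplicial complex with the spherical path metric, the barycentric
coordinate functions form a partition of unity which is uniformly point-wise locally finite
(with bound `dim + 1`), equicontinuous, and has supports of `U₂`-bounded size (each contained
in the ball of radius `2` around the corresponding vertex). -/
theorem stmt4 {V : Type*} [DecidableEq V] (K : Set (Finset V)) (n : ℕ)
    (hdown : ∀ s ∈ K, ∀ t : Finset V, t ⊆ s → t.Nonempty → t ∈ K)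
    (hsing : ∀ v : V, (∃ s ∈ K, v ∈ s) → ({v} : Finset V) ∈ K)
    (hdim : ∀ s ∈ K, s.card ≤ n + 1) :
    (∀ x : SPoint K,
      (x.f.support.sum fun v => x.f v) = 1 ∧ x.f.support.card ≤ n + 1) ∧
    (∀ ε : ℝ, 0 < ε → ∃ δ : ℝ, 0 < δ ∧ ∀ x y : SPoint K,
      pathDist x y ≤ ENNReal.ofReal δ → ∀ v : V, |x.f v - y.f v| ≤ ε) ∧
    (∀ (v : V) (hv : ({v} : Finset V) ∈ K) (x : SPoint K), x.f v ≠ 0 →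
      pathDist x (vertexPoint v hv) ≤ ENNReal.ofReal 2) :=
  stmt4_general K n hdim
end

section
/- Let X be a uniform bornological coarse space and let s : X → X be a scaling, i.e., (1) s is 1-Lipschitz with respect to the metric inducing the uniform structure, (2) for every coarse entourage W and every uniform entourage V there exists k ∈ ℕ with (s^k × s^k)(W) ⊆ V, and (3) for every coarse entourage U, the union ⋃_{k ∈ ℕ} (s^k × s^k)(U) is again a coarse entourage. Assume moreover that s is proper and that t ↦ n + t is proper for each n. Then the map Φ : ℕ × [0,∞) × X → [0,∞) × X defined by Φ(n, t, x) := (n + t, sⁿ(x)) is proper: the preimage of every bounded subset [0,u] × B (u ∈ ℕ, B bounded in X) is bounded in ℕ_{min,min} ⊗ Õ(X). -/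
open scoped NNReal

/-- Let `X` be a uniform bornological coarse space (uniform structure induced by a metric,
coarse structure `CX`, bornology `BX`) and let `s : X → X` be a scaling:
(1) `s` is `1`-Lipschitz, (2) iterates of `s` contract every coarse entourage into arbitrarily
small uniform (metric) entourages, (3) the union of the iterated images of a coarse entourage
is again coarse.  Then the map `Φ(n,t,x) := (n + t, sⁿ(x))` is proper: the preimage of every
generating bounded subset `[0,u] × B` of the cone `Õ(X)` is bounded in `ℕ_{min,min} ⊗ Õ(X)`,
provided `s` is proper. -/
theorem stmt5 {X : Type*} [PseudoMetricSpace X]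
    (BX : Set (Set X))
    (hBunion : ∀ B₁ ∈ BX, ∀ B₂ ∈ BX, B₁ ∪ B₂ ∈ BX)
    (hBmono : ∀ B ∈ BX, ∀ C : Set X, C ⊆ B → C ∈ BX)
    (CX : Set (Set (X × X)))
    (s : X → X)
    (hLip : LipschitzWith 1 s)
    (hcontr : ∀ W ∈ CX, ∀ ε : ℝ, 0 < ε → ∃ k : ℕ, ∀ p ∈ W,
      dist (s^[k] (Prod.fst p)) (s^[k] (Prod.snd p)) ≤ ε)
    (hstable : ∀ U ∈ CX, (⋃ k : ℕ, (fun p : X × X => (s^[k] p.1, s^[k] p.2)) '' U) ∈ CX)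
    (hproper : ∀ B ∈ BX, s ⁻¹' B ∈ BX)
    (u : ℕ) (B : Set X) (hB : B ∈ BX) :
    ∃ (F : Finset ℕ) (m : ℕ) (B' : Set X), B' ∈ BX ∧
      {p : ℕ × ℝ≥0 × X | (p.1 : ℝ≥0) + p.2.1 ≤ (u : ℝ≥0) ∧ s^[p.1] p.2.2 ∈ B} ⊆
        (↑F : Set ℕ) ×ˢ ({t : ℝ≥0 | t ≤ (m : ℝ≥0)} ×ˢ B') := by
  have hiter : ∀ k : ℕ, s^[k] ⁻¹' B ∈ BX := by
    intro k
    induction k with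
    | zero => simpa using hB
    | succ k ih =>
        have : s^[k + 1] ⁻¹' B = s ⁻¹' (s^[k] ⁻¹' B) := by
          ext x; simp [Function.iterate_succ_apply', Function.iterate_succ_apply]
        rw [Function.iterate_succ]
        simpa [Set.preimage_comp] using hproper _ ih
  have hbig : ∀ k : ℕ, (⋃ j ∈ Finset.range (k + 1), s^[j] ⁻¹' B) ∈ BX := by
    intro k
    induction k with
    | zero => simpa using hiter 0
    | succ k ih =>
        have heq : (⋃ j ∈ Finset.range (k + 2), s^[j] ⁻¹' B)
            = (⋃ j ∈ Finset.range (k + 1), s^[j] ⁻¹' B) ∪ s^[k + 1] ⁻¹' B := by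
          rw [Finset.range_add_one]
          ext x
          simp [or_comm]
        rw [heq]
        exact hBunion _ ih _ (hiter (k + 1))
  refine ⟨Finset.range (u + 1), u, ⋃ j ∈ Finset.range (u + 1), s^[j] ⁻¹' B, hbig u, ?_⟩
  rintro ⟨n, t, x⟩ ⟨hle, hx⟩
  have hn : n ≤ u := by exact_mod_cast le_trans (le_add_right le_rfl) hle
  have ht : t ≤ (u : ℝ≥0) := le_trans (le_add_left le_rfl) hle
  have hmem : n ∈ Finset.range (u + 1) := Finset.mem_range.mpr (Nat.lt_succ_of_le hn)
  exact ⟨hmem, ht, Set.mem_biUnion hmem hx⟩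
end

section
/- Let X be a metric space and let ψ, e be functions with: ψ : ℝ → [0,∞) monotonously decreasing (extended by ψ(t) = ψ(0) for t < 0) with lim_{t→∞} ψ(t) = 0, and e : ℕ → [0,∞] monotonously decreasing with lim_{n→∞} e(n) = 0. Fix r ≥ 0 and define ψ'(t) := max{ min{ψ(t − n − r), e(n)} : n ∈ ℕ, t ≥ n } (a supremum over finitely many n since n ≤ t). Then lim_{t→∞} ψ'(t) = 0. -/
open scoped ENNReal

/-- Decay of the entourage-width function for the cone shift map: if `ψ` is a nonnegative
antitone real function tending to `0` at infinity and `e : ℕ → [0,∞]` is antitone tending to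
`0`, then for fixed `r ≥ 0` the function
`ψ'(t) := sup { min(ψ(t − n − r), e(n)) : n ∈ ℕ, n ≤ t }` tends to `0` at infinity. -/
theorem stmt6 (ψ : ℝ → ℝ) (hψ0 : ∀ t, 0 ≤ ψ t) (hψmono : Antitone ψ)
    (hψlim : Filter.Tendsto ψ Filter.atTop (nhds 0))
    (e : ℕ → ℝ≥0∞) (hemono : Antitone e)
    (helim : Filter.Tendsto e Filter.atTop (nhds 0))
    (r : ℝ) (hr : 0 ≤ r) :
    Filter.Tendsto
      (fun t : ℝ => ⨆ (n : ℕ) (_ : (n : ℝ) ≤ t),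
        min (ENNReal.ofReal (ψ (t - n - r))) (e n))
      Filter.atTop (nhds 0) := by
  rw [ENNReal.tendsto_nhds_zero]
  intro ε hε
  rcases eq_or_ne ε ⊤ with rfl | hεtop
  · filter_upwards with t using le_top
  have hε' : 0 < ε.toReal := ENNReal.toReal_pos hε.ne' hεtop
  obtain ⟨n₀, hn₀⟩ := Filter.eventually_atTop.mp ((ENNReal.tendsto_nhds_zero.mp helim) ε hε)
  obtain ⟨t₁, ht₁⟩ := Filter.eventually_atTop.mp (hψlim.eventually_lt_const hε')
  filter_upwards [Filter.eventually_ge_atTop (t₁ + n₀ + r)] with t ht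
  refine iSup₂_le fun n hn => ?_
  by_cases hc : n₀ ≤ n
  · exact le_trans (min_le_right _ _) (hn₀ n hc)
  · refine le_trans (min_le_left _ _) ?_
    have hn' : (n : ℝ) ≤ n₀ := by exact_mod_cast le_of_lt (not_le.mp hc)
    have h1 : t₁ ≤ t - n - r := by linarith
    calc ENNReal.ofReal (ψ (t - n - r)) ≤ ENNReal.ofReal (ψ t₁) :=
          ENNReal.ofReal_le_ofReal (hψmono h1)
      _ ≤ ENNReal.ofReal ε.toReal := ENNReal.ofReal_le_ofReal (ht₁ t₁ le_rfl).le
      _ = ε := ENNReal.ofReal_toReal hεtop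
end

section
/- Let T be the uniform structure of a uniform space X and let φ, φ' : [0,∞) → T be monotone cofinal functions (with respect to the order opposite to inclusion) with φ(t) ⊆ φ'(t) for all t. Define δ : [0,∞) → [0,∞) by δ(s) := sup{t : φ'(s) ⊆ φ(t)}; assume δ is monotonously increasing with lim_{s→∞} δ(s) = ∞ and δ(t₀) ≥ 2 for some t₀. Define h(t) := max{1, sup_{s ∈ [1,t]} δ⁻¹(2s)} where δ⁻¹(u) := sup{r : δ(r) ≤ u}, and for t ≥ t₀ let σ(t) be the unique solution of t = ∫₀^{σ(t)} h(s) ds, with σ(t) := 0 for t ∈ [0, t₀]. Then: (1) σ is 1-Lipschitz on [t₀, ∞), (2) lim_{t→∞} σ(t) = ∞, and (3) φ'(t) ⊆ φ(σ(t)) for all t ≥ t₀. -/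
/-!
Let `G x = ∫₀ˣ h`. Since `h ≥ 1`, `G` increases at least as fast as the identity, so its right
inverse `σ` is `1`-Lipschitz and tends to infinity. For the inclusion, `h ≥ t` on
`[δ(t)/2, δ(t)]` because `δ⁻¹(2s) ≥ t` as soon as `δ(t) ≤ 2s`; hence `G (δ t) > t = G (σ t)`, so
`σ t < δ t = sup {r | φ' t ⊆ φ r}`, and monotonicity of `φ` gives `φ' t ⊆ φ (σ t)`.
-/

open Set Filter MeasureTheory intervalIntegral

section Sublevel

variable {δ : ℝ → ℝ}

lemma bddAbove_setOf_le_of_tendsto_atTop (hδ : Tendsto δ atTop atTop) (u : ℝ) :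
    BddAbove {r | δ r ≤ u} := by
  obtain ⟨R, hR⟩ := eventually_atTop.mp (hδ.eventually_gt_atTop u)
  exact ⟨R, fun r hr => not_lt.mp fun hRr => (hR r hRr.le).not_ge hr⟩

lemma bddAbove_image_sSup_setOf_le_Iic (hδ : Tendsto δ atTop atTop) (U : ℝ) :
    BddAbove ((fun u => sSup {r | δ r ≤ u}) '' Iic U) := by
  refine ⟨max (sSup {r | δ r ≤ U}) 0, ?_⟩
  rintro _ ⟨u, hu, rfl⟩
  refine Real.sSup_le (fun r hr => le_max_of_le_left ?_) (le_max_right _ _)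
  exact le_csSup (bddAbove_setOf_le_of_tendsto_atTop hδ U) (show δ r ≤ U from hr.trans hu)

end Sublevel

lemma monotone_max_sSup_image_Icc {f : ℝ → ℝ} {a c : ℝ} (hc : 0 ≤ c)
    (hf : ∀ t, BddAbove (f '' Icc a t)) : Monotone fun t => max c (sSup (f '' Icc a t)) := by
  intro s t hst
  rcases lt_or_ge s a with hs | hs
  · simp only [Icc_eq_empty (not_le.mpr hs), image_empty, Real.sSup_empty, max_eq_left hc]
    exact le_max_left _ _
  · exact max_le_max le_rfl <| csSup_le_csSup (hf t) ⟨f a, a, ⟨le_rfl, hs⟩, rfl⟩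
      (image_mono (Icc_subset_Icc_right hst))

lemma subset_of_lt_sSup_setOf_subset {α : Type*} {φ : ℝ → Set α} (hφ : AntitoneOn φ (Ici 0))
    {A : Set α} {x : ℝ} (hx : 0 ≤ x) (hlt : x < sSup {r | A ⊆ φ r}) : A ⊆ φ x := by
  rcases eq_empty_or_nonempty {r | A ⊆ φ r} with hempty | hne
  · rw [hempty, Real.sSup_empty] at hlt
    exact absurd hx hlt.not_ge
  obtain ⟨r, hr, hxr⟩ := exists_lt_of_lt_csSup hne hlt
  exact hr.trans (hφ hx (hx.trans hxr.le : (0 : ℝ) ≤ r) hxr.le)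

section Integral

variable {h : ℝ → ℝ}

lemma mul_sub_le_intervalIntegral {a b c : ℝ} (hab : a ≤ b)
    (hint : IntervalIntegrable h volume a b) (hc : ∀ x ∈ Icc a b, c ≤ h x) :
    c * (b - a) ≤ ∫ x in a..b, h x := by
  calc c * (b - a) = ∫ _ in a..b, c := by
        rw [intervalIntegral.integral_const, smul_eq_mul, mul_comm]
    _ ≤ ∫ x in a..b, h x := integral_mono_on hab intervalIntegrable_const hint hc

variable (hone : ∀ x, 1 ≤ h x) (hint : ∀ a b, IntervalIntegrable h volume a b)
include hone hint

lemma sub_le_integral_sub_integral {a b : ℝ} (hab : a ≤ b) :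
    b - a ≤ (∫ x in 0..b, h x) - ∫ x in 0..a, h x := by
  rw [integral_interval_sub_left (hint 0 b) (hint 0 a)]
  simpa using mul_sub_le_intervalIntegral hab (hint a b) fun x _ => hone x

lemma lt_intervalIntegral_of_le_on_Icc_half {d t : ℝ} (hd : 2 ≤ d) (ht : 0 ≤ t)
    (hlarge : ∀ s ∈ Icc (d / 2) d, t ≤ h s) : t < ∫ x in 0..d, h x := by
  have hlow : 1 * (d / 2 - 0) ≤ ∫ x in 0..d / 2, h x :=
    mul_sub_le_intervalIntegral (by linarith) (hint _ _) fun x _ => hone x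
  have hhigh : t * (d - d / 2) ≤ ∫ x in d / 2..d, h x :=
    mul_sub_le_intervalIntegral (by linarith) (hint _ _) hlarge
  rw [← integral_add_adjacent_intervals (hint 0 (d / 2)) (hint _ _)]
  nlinarith

end Integral

section RightInverse

variable {G σ : ℝ → ℝ}

lemma strictMono_of_sub_le_sub (hG : ∀ a b, a ≤ b → b - a ≤ G b - G a) : StrictMono G :=
  fun a b hab => by linarith [hG a b hab.le]

lemma lipschitzOnWith_one_of_rightInvOn {s : Set ℝ} (hG : ∀ a b, a ≤ b → b - a ≤ G b - G a)
    (hσ : RightInvOn σ G s) : LipschitzOnWith 1 σ s := by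
  refine LipschitzOnWith.mk_one fun x hx y hy => ?_
  wlog hxy : σ x ≤ σ y generalizing x y
  · rw [dist_comm, dist_comm x]
    exact this y hy x hx (le_of_not_ge hxy)
  have hexpand := hG _ _ hxy
  rw [hσ hx, hσ hy] at hexpand
  rw [Real.dist_eq, Real.dist_eq, abs_of_nonpos (sub_nonpos.2 hxy)]
  linarith [neg_abs_le (x - y)]

end RightInverse

lemma tendsto_atTop_of_strictMono_of_eventually_comp_eq {α β : Type*} [Preorder α]
    [LinearOrder β] {G : β → α} {σ : α → β} (hG : StrictMono G)
    (hσ : ∀ᶠ t in atTop, G (σ t) = t) : Tendsto σ atTop atTop :=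
  tendsto_atTop.2 fun b => (hσ.and (eventually_ge_atTop (G b))).mono fun _ ⟨ht, hbt⟩ =>
    hG.le_iff_le.1 (ht.symm ▸ hbt)

theorem stmt7_general {X : Type*}
    (φ φ' : ℝ → Set (X × X))
    (hφmono : ∀ s t : ℝ, 0 ≤ s → s ≤ t → φ t ⊆ φ s)
    (δ : ℝ → ℝ) (hδdef : ∀ s : ℝ, δ s = sSup {t : ℝ | φ' s ⊆ φ t})
    (hδmono : Monotone δ) (hδtop : Filter.Tendsto δ Filter.atTop Filter.atTop)
    (t₀ : ℝ) (ht₀0 : 0 ≤ t₀) (ht₀ : 2 ≤ δ t₀)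
    (δinv : ℝ → ℝ) (hδinv : ∀ u : ℝ, δinv u = sSup {r : ℝ | δ r ≤ u})
    (h : ℝ → ℝ)
    (hh : ∀ t : ℝ, h t = max 1 (sSup ((fun s => δinv (2 * s)) '' Set.Icc 1 t)))
    (σ : ℝ → ℝ)
    (hσeq : ∀ t ≥ t₀, t = ∫ s in (0 : ℝ)..(σ t), h s) :
    LipschitzOnWith 1 σ (Set.Ici t₀) ∧
    Filter.Tendsto σ Filter.atTop Filter.atTop ∧
    ∀ t ≥ t₀, φ' t ⊆ φ (σ t) := by
  have hδinv_bdd : ∀ t, BddAbove ((fun s => δinv (2 * s)) '' Icc 1 t) := fun t =>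
    (bddAbove_image_sSup_setOf_le_Iic hδtop (2 * t)).mono <| by
      rintro _ ⟨s, hs, rfl⟩
      exact ⟨2 * s, mem_Iic.2 (by linarith [hs.2]), (hδinv _).symm⟩
  have hone : ∀ x, 1 ≤ h x := fun x => (hh x).symm ▸ le_max_left _ _
  have hmono : Monotone h := fun a b hab => by
    simpa only [hh] using monotone_max_sSup_image_Icc zero_le_one hδinv_bdd hab
  have hint : ∀ a b, IntervalIntegrable h volume a b := fun _ _ => hmono.intervalIntegrable
  set G : ℝ → ℝ := fun x => ∫ s in (0 : ℝ)..x, h s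
  have hG : ∀ a b, a ≤ b → b - a ≤ G b - G a := fun _ _ => sub_le_integral_sub_integral hone hint
  have hGσ : RightInvOn σ G (Ici t₀) := fun t ht => (hσeq t ht).symm
  have hG_strictMono : StrictMono G := strictMono_of_sub_le_sub hG
  have hσδ : ∀ t ≥ t₀, σ t < δ t := fun t ht => by
    have hδt : 2 ≤ δ t := ht₀.trans (hδmono ht)
    have hlarge : ∀ s ∈ Icc (δ t / 2) (δ t), t ≤ h s := fun s hs => calc
      t ≤ δinv (2 * s) := (hδinv _).symm ▸
          le_csSup (bddAbove_setOf_le_of_tendsto_atTop hδtop _) (by linarith [hs.1] : δ t ≤ 2 * s)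
      _ ≤ h s := (hh s).symm ▸ le_max_of_le_right
          (le_csSup (hδinv_bdd s) ⟨s, ⟨by linarith [hs.1], le_rfl⟩, rfl⟩)
    rw [← hG_strictMono.lt_iff_lt, hGσ ht]
    exact lt_intervalIntegral_of_le_on_Icc_half hone hint hδt (ht₀0.trans ht) hlarge
  refine ⟨lipschitzOnWith_one_of_rightInvOn hG hGσ,
    tendsto_atTop_of_strictMono_of_eventually_comp_eq hG_strictMono
      ((eventually_ge_atTop t₀).mono fun t ht => hGσ ht), fun t ht => ?_⟩
  have hσ_nonneg : 0 ≤ σ t := by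
    rw [← hG_strictMono.le_iff_le, hGσ ht]
    simpa only [G, integral_same] using ht₀0.trans ht
  exact subset_of_lt_sSup_setOf_subset (fun s hs t _ hst => hφmono s t hs hst) hσ_nonneg
    (hδdef t ▸ hσδ t ht)

/-- Comparison of two cofinal decay functions into the uniform structure: given monotone
(w.r.t. the order opposite to inclusion) cofinal `φ ⊆ φ'` and the reparametrization `σ` defined
by the integral equation `t = ∫₀^{σ(t)} h`, the function `σ` is `1`-Lipschitz on `[t₀,∞)`,
tends to infinity, and satisfies `φ'(t) ⊆ φ(σ(t))` for `t ≥ t₀`. -/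
theorem stmt7 {X : Type*} [UniformSpace X]
    (φ φ' : ℝ → Set (X × X))
    (hφu : ∀ t, 0 ≤ t → φ t ∈ uniformity X)
    (hφ'u : ∀ t, 0 ≤ t → φ' t ∈ uniformity X)
    (hφmono : ∀ s t : ℝ, 0 ≤ s → s ≤ t → φ t ⊆ φ s)
    (hφ'mono : ∀ s t : ℝ, 0 ≤ s → s ≤ t → φ' t ⊆ φ' s)
    (hφcof : ∀ V ∈ uniformity X, ∃ t₀ : ℝ, ∀ s ≥ t₀, φ s ⊆ V)
    (hφ'cof : ∀ V ∈ uniformity X, ∃ t₀ : ℝ, ∀ s ≥ t₀, φ' s ⊆ V)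
    (hsub : ∀ t : ℝ, φ t ⊆ φ' t)
    (δ : ℝ → ℝ) (hδdef : ∀ s : ℝ, δ s = sSup {t : ℝ | φ' s ⊆ φ t})
    (hδmono : Monotone δ) (hδtop : Filter.Tendsto δ Filter.atTop Filter.atTop)
    (t₀ : ℝ) (ht₀0 : 0 ≤ t₀) (ht₀ : 2 ≤ δ t₀)
    (δinv : ℝ → ℝ) (hδinv : ∀ u : ℝ, δinv u = sSup {r : ℝ | δ r ≤ u})
    (h : ℝ → ℝ)
    (hh : ∀ t : ℝ, h t = max 1 (sSup ((fun s => δinv (2 * s)) '' Set.Icc 1 t)))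
    (σ : ℝ → ℝ) (hσ0 : ∀ t ≤ t₀, σ t = 0)
    (hσeq : ∀ t ≥ t₀, t = ∫ s in (0 : ℝ)..(σ t), h s) :
    LipschitzOnWith 1 σ (Set.Ici t₀) ∧
    Filter.Tendsto σ Filter.atTop Filter.atTop ∧
    ∀ t ≥ t₀, φ' t ⊆ φ (σ t) :=
  stmt7_general φ φ' hφmono δ hδdef hδmono hδtop t₀ ht₀0 ht₀ δinv hδinv h hh σ hσeq
end

section
/- Let f : X → X' be a morphism of bornological coarse spaces and let U, U' be coarse entourages of X, X' respectively with (f × f)(U) ⊆ U'. Then the push-forward of measures f_* : P_U(X) → P_{U'}(X'), μ ↦ f_*μ, is well defined (it sends finitely supported U-bounded probability measures to finitely supported U'-bounded probability measures) and is a morphism of uniform bornological coarse spaces: it is uniformly continuous, controlled, and proper with respect to the structures induced by the spherical path metrics and the bornologies generated by the subcomplexes P_U(B), respectively P_{U'}(B'). -/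
open scoped ENNReal

/-- The faces of the Rips complex `P_U(X)`: nonempty finite `U`-bounded subsets of `X`. -/
def ripsFaces {X : Type*} (U : Set (X × X)) : Set (Finset X) :=
  {s | s.Nonempty ∧ ∀ x ∈ s, ∀ y ∈ s, (x, y) ∈ U}

/-!
Push-forward along `f` is a simplicial map `P_U(X) → P_{U'}(X')`, and it does not increase
the spherical distance: the cosine `∑ √(μ x) √(ν x)` of the angle between two measures can
only grow, because on each fibre of `f` Cauchy–Schwarz gives
`∑_{f x = y} √(μ x) √(ν x) ≤ √(f_*μ y) √(f_*ν y)`. Hence `f_*` is `1`-Lipschitz for the path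
metric, so it is uniformly continuous and controlled; properness is inherited from `f`, since
`supp (f_*μ) = f (supp μ)`.
-/

namespace Finsupp

variable {α β : Type*} [DecidableEq β]

theorem mapDomain_apply_eq_sum_filter {f : α → β} {μ : α →₀ ℝ} {S : Finset α}
    (hS : μ.support ⊆ S) (b : β) :
    μ.mapDomain f b = ∑ a ∈ S with f a = b, μ a := by
  rw [mapDomain, sum_apply, sum]
  simp_rw [single_apply, ← Finset.sum_filter]
  refine Finset.sum_subset (Finset.filter_subset_filter _ hS) fun a ha ha' => ?_
  by_contra h
  exact ha' (Finset.mem_filter.mpr ⟨mem_support_iff.mpr h, (Finset.mem_filter.mp ha).2⟩)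

theorem support_mapDomain_of_nonneg (f : α → β) {μ : α →₀ ℝ} (hμ : 0 ≤ μ) :
    (μ.mapDomain f).support = μ.support.image f := by
  refine mapDomain_support.antisymm fun b hb => ?_
  obtain ⟨a, ha, rfl⟩ := Finset.mem_image.mp hb
  have hfibre : μ a ≤ μ.mapDomain f (f a) := by
    rw [mapDomain_apply_eq_sum_filter subset_rfl]
    exact Finset.single_le_sum (fun a' _ => hμ a') (Finset.mem_filter.mpr ⟨ha, rfl⟩)
  exact mem_support_iff.mpr ((lt_of_le_of_ne (hμ a) (mem_support_iff.mp ha).symm).trans_le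
    hfibre).ne'

end Finsupp

/-- The cosine of the spherical distance:
`sphDist x y = Real.arccos (bhattacharyyaCoeff x.f y.f)`. -/
noncomputable def bhattacharyyaCoeff {α : Type*} [DecidableEq α] (μ ν : α →₀ ℝ) : ℝ :=
  ∑ a ∈ μ.support ∪ ν.support, √(μ a) * √(ν a)

theorem bhattacharyyaCoeff_le_mapDomain {α β : Type*} [DecidableEq α] [DecidableEq β]
    (f : α → β) {μ ν : α →₀ ℝ} (hμ : 0 ≤ μ) (hν : 0 ≤ ν) :
    bhattacharyyaCoeff μ ν ≤ bhattacharyyaCoeff (μ.mapDomain f) (ν.mapDomain f) := by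
  set S := μ.support ∪ ν.support
  have hsupp : (μ.mapDomain f).support ∪ (ν.mapDomain f).support = S.image f := by
    rw [Finsupp.support_mapDomain_of_nonneg f hμ, Finsupp.support_mapDomain_of_nonneg f hν,
      Finset.image_union]
  unfold bhattacharyyaCoeff
  rw [hsupp, ← Finset.sum_fiberwise_of_maps_to (g := f) fun a ha => Finset.mem_image_of_mem f ha]
  refine Finset.sum_le_sum fun b _ => ?_
  rw [Finsupp.mapDomain_apply_eq_sum_filter (Finset.subset_union_left (s₂ := ν.support)) b,
    Finsupp.mapDomain_apply_eq_sum_filter (Finset.subset_union_right (s₁ := μ.support)) b]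
  exact Real.sum_sqrt_mul_sqrt_le _ hμ hν

namespace SPoint

variable {V W : Type*} [DecidableEq W] {K : Set (Finset V)} {L : Set (Finset W)}

noncomputable def map (g : V → W) (hg : ∀ s ∈ K, s.image g ∈ L) (x : SPoint K) : SPoint L where
  f := x.f.mapDomain g
  nonneg := Finsupp.mapDomain_nonneg x.nonneg
  sum_one := by
    have h := Finsupp.sum_mapDomain_index (f := g) (s := x.f) (h := fun _ (t : ℝ) => t)
      (fun _ => rfl) (fun _ _ _ => rfl)
    simpa [Finsupp.sum, x.sum_one] using h
  mem := by
    rw [Finsupp.support_mapDomain_of_nonneg g x.nonneg]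
    exact hg _ x.mem

variable (g : V → W) (hg : ∀ s ∈ K, s.image g ∈ L)

theorem support_map (x : SPoint K) : (map g hg x).f.support = x.f.support.image g :=
  Finsupp.support_mapDomain_of_nonneg g x.nonneg

theorem sphDist_map_le [DecidableEq V] (x y : SPoint K) :
    sphDist (map g hg x) (map g hg y) ≤ sphDist x y :=
  Real.arccos_le_arccos (bhattacharyyaCoeff_le_mapDomain g x.nonneg y.nonneg)

theorem pathDist_map_le [DecidableEq V] (x y : SPoint K) :
    pathDist (map g hg x) (map g hg y) ≤ pathDist x y := by
  apply sInf_le_sInf_of_isCoinitialFor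
  rintro _ ⟨k, c, rfl, rfl, hc, rfl⟩
  refine ⟨_, ⟨k, fun i => map g hg (c i), rfl, rfl, fun i hi => ?_, rfl⟩,
    Finset.sum_le_sum fun i _ => ENNReal.ofReal_le_ofReal (sphDist_map_le g hg _ _)⟩
  rw [support_map, support_map, ← Finset.image_union]
  exact hg _ (hc i hi)

end SPoint

theorem image_mem_ripsFaces {X X' : Type*} [DecidableEq X'] {f : X → X'} {U : Set (X × X)}
    {U' : Set (X' × X')} (hUU' : ∀ p ∈ U, (f p.1, f p.2) ∈ U') {s : Finset X}
    (hs : s ∈ ripsFaces U) : s.image f ∈ ripsFaces U' := by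
  obtain ⟨hne, hU⟩ := hs
  refine ⟨hne.image f, ?_⟩
  simp only [Finset.forall_mem_image]
  exact fun a ha b hb => hUU' (a, b) (hU a ha b hb)

theorem stmt11_general {X X' : Type*} [DecidableEq X] [DecidableEq X']
    (BX : Set (Set X)) (BX' : Set (Set X'))
    (f : X → X')
    (hfp : ∀ B' ∈ BX', f ⁻¹' B' ∈ BX)
    (U : Set (X × X)) (U' : Set (X' × X'))
    (hUU' : ∀ p ∈ U, (f p.1, f p.2) ∈ U') :
    ∃ F : SPoint (ripsFaces U) → SPoint (ripsFaces U'),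
      (∀ μ : SPoint (ripsFaces U), (F μ).f = Finsupp.mapDomain f μ.f) ∧
      (∀ ε : ℝ, 0 < ε → ∃ δ : ℝ, 0 < δ ∧ ∀ μ ν : SPoint (ripsFaces U),
        pathDist μ ν ≤ ENNReal.ofReal δ → pathDist (F μ) (F ν) ≤ ENNReal.ofReal ε) ∧
      (∀ r : ℝ, ∃ r' : ℝ, ∀ μ ν : SPoint (ripsFaces U),
        pathDist μ ν ≤ ENNReal.ofReal r → pathDist (F μ) (F ν) ≤ ENNReal.ofReal r') ∧
      (∀ B' ∈ BX', ∃ B ∈ BX, ∀ μ : SPoint (ripsFaces U),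
        (↑(F μ).f.support : Set X') ⊆ B' → (↑μ.f.support : Set X) ⊆ B) := by
  have hg : ∀ s ∈ ripsFaces U, s.image f ∈ ripsFaces U' := fun _ => image_mem_ripsFaces hUU'
  have hlip := SPoint.pathDist_map_le f hg
  refine ⟨SPoint.map f hg, fun _ => rfl,
    fun ε hε => ⟨ε, hε, fun μ ν h => (hlip μ ν).trans h⟩,
    fun r => ⟨r, fun μ ν h => (hlip μ ν).trans h⟩,
    fun B' hB' => ⟨f ⁻¹' B', hfp B' hB', fun μ hμ x hx => hμ ?_⟩⟩
  rw [SPoint.support_map]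
  exact Finset.mem_image_of_mem f hx

/-- Functoriality of the Rips complex: for a morphism `f : X → X'` of bornological coarse
spaces with `(f × f)(U) ⊆ U'`, the push-forward of measures is a well-defined morphism of
uniform bornological coarse spaces `P_U(X) → P_{U'}(X')`: it is uniformly continuous,
controlled, and proper. -/
theorem stmt11 {X X' : Type*} [DecidableEq X] [DecidableEq X']
    (BX : Set (Set X)) (BX' : Set (Set X'))
    (CX : Set (Set (X × X))) (CX' : Set (Set (X' × X')))
    (f : X → X')
    (hfc : ∀ W ∈ CX, (fun p : X × X => (f p.1, f p.2)) '' W ∈ CX')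
    (hfp : ∀ B' ∈ BX', f ⁻¹' B' ∈ BX)
    (U : Set (X × X)) (hU : U ∈ CX) (U' : Set (X' × X')) (hU' : U' ∈ CX')
    (hdiag : Set.diagonal X ⊆ U) (hdiag' : Set.diagonal X' ⊆ U')
    (hUU' : ∀ p ∈ U, (f p.1, f p.2) ∈ U') :
    ∃ F : SPoint (ripsFaces U) → SPoint (ripsFaces U'),
      (∀ μ : SPoint (ripsFaces U), (F μ).f = Finsupp.mapDomain f μ.f) ∧
      (∀ ε : ℝ, 0 < ε → ∃ δ : ℝ, 0 < δ ∧ ∀ μ ν : SPoint (ripsFaces U),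
        pathDist μ ν ≤ ENNReal.ofReal δ → pathDist (F μ) (F ν) ≤ ENNReal.ofReal ε) ∧
      (∀ r : ℝ, ∃ r' : ℝ, ∀ μ ν : SPoint (ripsFaces U),
        pathDist μ ν ≤ ENNReal.ofReal r → pathDist (F μ) (F ν) ≤ ENNReal.ofReal r') ∧
      (∀ B' ∈ BX', ∃ B ∈ BX, ∀ μ : SPoint (ripsFaces U),
        (↑(F μ).f.support : Set X') ⊆ B' → (↑μ.f.support : Set X) ⊆ B) :=
  stmt11_general BX BX' f hfp U U' hUU'
end

section
/- Let X be a uniform bornological coarse space and O(X)_- the bornological coarse space with underlying set ℝ × X, whose bounded sets are those contained in [−n,n] × B for some n and some bounded B of X, and with the hybrid coarse structure associated to the big family ((−∞,n] × X)_{n ∈ ℕ} on ℝ ⊗ X. Then the pair of subsets ((−∞,0] × X, [0,∞) × X) is a coarsely excisive decomposition of O(X)_-: their union is ℝ × X, and for every coarse entourage V of O(X)_- there is a coarse entourage W with V[(−∞,0] × X] ∩ V[[0,∞) × X] ⊆ W[{0} × X]. -/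
/-- The coarse structure generated by a family `S` of entourages. -/
inductive GenCoarse {α : Type*} (S : Set (Set (α × α))) : Set (α × α) → Prop
  | base (W : Set (α × α)) (hW : W ∈ S) : GenCoarse S W
  | diag : GenCoarse S (Set.diagonal α)
  | subset (W W' : Set (α × α)) (h : GenCoarse S W') (hsub : W ⊆ W') : GenCoarse S W
  | union (W W' : Set (α × α)) (h : GenCoarse S W) (h' : GenCoarse S W') :
      GenCoarse S (W ∪ W')
  | inv (W : Set (α × α)) (h : GenCoarse S W) : GenCoarse S (Prod.swap '' W)
  | comp (W W' : Set (α × α)) (h : GenCoarse S W) (h' : GenCoarse S W') :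
      GenCoarse S (SetRel.comp W W')

/-- The generating entourages of the hybrid structure on `O(X)_- = ℝ × X`: intersections
`V ∩ U_{(κ,φ)}` where `V` is a coarse entourage of `ℝ ⊗ X`, `κ → 0` at infinity, and `φ` is
cofinal into the uniform structure of `X`. -/
def hybridBase (X : Type*) [UniformSpace X] (CX : Set (Set (X × X))) :
    Set (Set ((ℝ × X) × (ℝ × X))) :=
  {W | ∃ (r : ℝ) (WX : Set (X × X)), WX ∈ CX ∧
    ∃ (κ : ℝ → ℝ) (φ : ℝ → Set (X × X)),
      (∀ t, 0 ≤ κ t) ∧ Filter.Tendsto κ Filter.atTop (nhds 0) ∧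
      (∀ t, φ t ∈ uniformity X) ∧
      (∀ V ∈ uniformity X, ∃ t₀ : ℝ, ∀ s ≥ t₀, φ s ⊆ V) ∧
      W ⊆ {p : (ℝ × X) × (ℝ × X) |
        (|p.1.1 - p.2.1| ≤ r ∧ (p.1.2, p.2.2) ∈ WX) ∧
        |p.1.1 - p.2.1| ≤ κ (max p.1.1 p.2.1) ∧
        (p.1.2, p.2.2) ∈ φ (max p.1.1 p.2.1)}}

/-- Auxiliary: from any base datum we can build a generated entourage containing all pairs
`((s,x),(0,y))` and `((0,x),(s,y))` with `|s| ≤ c` and `(x,y) ∈ WX`. -/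
private lemma baseEnt {X : Type*} [UniformSpace X] {CX : Set (Set (X × X))}
    {WX : Set (X × X)} (hWX : WX ∈ CX) {κ : ℝ → ℝ} {φ : ℝ → Set (X × X)}
    (hκ0 : ∀ t, 0 ≤ κ t) (hκ : Filter.Tendsto κ Filter.atTop (nhds 0))
    (hφu : ∀ t, φ t ∈ uniformity X)
    (hφc : ∀ V ∈ uniformity X, ∃ t₀ : ℝ, ∀ s ≥ t₀, φ s ⊆ V)
    {c : ℝ} (hc : 0 ≤ c) :
    ∃ M, GenCoarse (hybridBase X CX) M ∧
      ∀ s x y, |s| ≤ c → (x, y) ∈ WX →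
        (((s, x), ((0 : ℝ), y)) ∈ M ∧ (((0 : ℝ), x), (s, y)) ∈ M) := by
  set κ' : ℝ → ℝ := fun t => if t ≤ c then c else κ t with hκ'def
  set φ' : ℝ → Set (X × X) := fun t => if t ≤ c then Set.univ else φ t with hφ'def
  refine ⟨{p : (ℝ × X) × (ℝ × X) |
      (|p.1.1 - p.2.1| ≤ c ∧ (p.1.2, p.2.2) ∈ WX) ∧
      |p.1.1 - p.2.1| ≤ κ' (max p.1.1 p.2.1) ∧
      (p.1.2, p.2.2) ∈ φ' (max p.1.1 p.2.1)}, ?_, ?_⟩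
  · refine GenCoarse.base _ ⟨c, WX, hWX, κ', φ', ?_, ?_, ?_, ?_, subset_rfl⟩
    · intro t
      simp only [hκ'def]
      split
      · exact hc
      · exact hκ0 t
    · refine Filter.Tendsto.congr' ?_ hκ
      filter_upwards [Filter.eventually_ge_atTop (c + 1)] with t ht
      simp only [hκ'def]
      rw [if_neg (by linarith)]
    · intro t
      simp only [hφ'def]
      split
      · exact Filter.univ_mem
      · exact hφu t
    · intro V hV
      obtain ⟨t₀, ht₀⟩ := hφc V hV
      refine ⟨max t₀ (c + 1), fun s hs => ?_⟩
      have h1 : t₀ ≤ s := le_trans (le_max_left _ _) hs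
      have h2 : c + 1 ≤ s := le_trans (le_max_right _ _) hs
      simp only [hφ'def]
      rw [if_neg (by linarith)]
      exact ht₀ s h1
  · intro s x y hs hxy
    have hs' : s ≤ c := le_trans (le_abs_self s) hs
    have hmax1 : max s 0 ≤ c := max_le hs' hc
    have hmax2 : max 0 s ≤ c := max_le hc hs'
    constructor
    · refine ⟨⟨by simpa using hs, hxy⟩, ?_, ?_⟩
      · show |s - 0| ≤ κ' (max s 0)
        simp only [hκ'def]
        rw [if_pos hmax1]
        simpa using hs
      · show (x, y) ∈ φ' (max s 0)
        simp only [hφ'def]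
        rw [if_pos hmax1]
        trivial
    · refine ⟨⟨by simpa [abs_sub_comm] using hs, hxy⟩, ?_, ?_⟩
      · show |0 - s| ≤ κ' (max 0 s)
        simp only [hκ'def]
        rw [if_pos hmax2]
        simpa [abs_sub_comm] using hs
      · show (x, y) ∈ φ' (max 0 s)
        simp only [hφ'def]
        rw [if_pos hmax2]
        trivial

/-- The key structural induction: every generated entourage has bounded ℝ-displacement,
and points near the level `{0}` can be pushed to level `0` by a generated entourage. -/
private lemma key {X : Type*} [UniformSpace X] {CX : Set (Set (X × X))}
    {W : Set ((ℝ × X) × (ℝ × X))} (h : GenCoarse (hybridBase X CX) W) :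
    (∃ r, 0 ≤ r ∧ ∀ p ∈ W, |p.1.1 - p.2.1| ≤ r) ∧
    (∀ c, 0 ≤ c → ∃ W', GenCoarse (hybridBase X CX) W' ∧
      ∀ x a : ℝ × X, (x, a) ∈ W → |x.1| ≤ c → ((x, ((0 : ℝ), a.2)) ∈ W' ∨ x = a)) ∧
    (∀ c, 0 ≤ c → ∃ W', GenCoarse (hybridBase X CX) W' ∧
      ∀ a x : ℝ × X, (a, x) ∈ W → |x.1| ≤ c → ((x, ((0 : ℝ), a.2)) ∈ W' ∨ x = a)) := by
  induction h with
  | base W hW =>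
    obtain ⟨r, WX, hWX, κ, φ, hκ0, hκ, hφu, hφc, hsub⟩ := hW
    refine ⟨⟨max r 0, le_max_right _ _, fun p hp => le_trans (hsub hp).1.1 (le_max_left _ _)⟩,
      ?_, ?_⟩
    · intro c hc
      obtain ⟨M, hM, hMm⟩ := baseEnt hWX hκ0 hκ hφu hφc hc
      refine ⟨M, hM, fun x a hxa hx => Or.inl ?_⟩
      exact (hMm x.1 x.2 a.2 hx (hsub hxa).1.2).1
    · intro c hc
      obtain ⟨M, hM, hMm⟩ := baseEnt hWX hκ0 hκ hφu hφc hc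
      refine ⟨Prod.swap '' M, GenCoarse.inv _ hM, fun a x hax hx => Or.inl ?_⟩
      exact ⟨(((0 : ℝ), a.2), x), (hMm x.1 a.2 x.2 hx (hsub hax).1.2).2, rfl⟩
  | diag =>
    refine ⟨⟨0, le_refl 0, fun p hp => ?_⟩,
      fun c hc => ⟨Set.diagonal _, GenCoarse.diag, fun x a hxa _ => Or.inr hxa⟩,
      fun c hc => ⟨Set.diagonal _, GenCoarse.diag, fun a x hax _ => Or.inr hax.symm⟩⟩
    have : p.1 = p.2 := hp
    rw [this, sub_self, abs_zero]
  | subset W W' hgen hsub ih =>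
    obtain ⟨⟨r, hr0, hr⟩, hQ, hQ'⟩ := ih
    refine ⟨⟨r, hr0, fun p hp => hr p (hsub hp)⟩, ?_, ?_⟩
    · intro c hc
      obtain ⟨M, hM, hMm⟩ := hQ c hc
      exact ⟨M, hM, fun x a hxa hx => hMm x a (hsub hxa) hx⟩
    · intro c hc
      obtain ⟨M, hM, hMm⟩ := hQ' c hc
      exact ⟨M, hM, fun a x hax hx => hMm a x (hsub hax) hx⟩
  | union W W' h h' ih ih' =>
    obtain ⟨⟨r₁, hr₁0, hr₁⟩, hQ₁, hQ₁'⟩ := ih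
    obtain ⟨⟨r₂, hr₂0, hr₂⟩, hQ₂, hQ₂'⟩ := ih'
    refine ⟨⟨max r₁ r₂, le_max_of_le_left hr₁0, fun p hp => ?_⟩, ?_, ?_⟩
    · rcases hp with hp | hp
      · exact le_trans (hr₁ p hp) (le_max_left _ _)
      · exact le_trans (hr₂ p hp) (le_max_right _ _)
    · intro c hc
      obtain ⟨M₁, hM₁, hMm₁⟩ := hQ₁ c hc
      obtain ⟨M₂, hM₂, hMm₂⟩ := hQ₂ c hc
      refine ⟨M₁ ∪ M₂, GenCoarse.union _ _ hM₁ hM₂, fun x a hxa hx => ?_⟩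
      rcases hxa with hxa | hxa
      · exact (hMm₁ x a hxa hx).imp (Set.mem_union_left _) id
      · exact (hMm₂ x a hxa hx).imp (Set.mem_union_right _) id
    · intro c hc
      obtain ⟨M₁, hM₁, hMm₁⟩ := hQ₁' c hc
      obtain ⟨M₂, hM₂, hMm₂⟩ := hQ₂' c hc
      refine ⟨M₁ ∪ M₂, GenCoarse.union _ _ hM₁ hM₂, fun a x hax hx => ?_⟩
      rcases hax with hax | hax
      · exact (hMm₁ a x hax hx).imp (Set.mem_union_left _) id
      · exact (hMm₂ a x hax hx).imp (Set.mem_union_right _) id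
  | inv W h ih =>
    obtain ⟨⟨r, hr0, hr⟩, hQ, hQ'⟩ := ih
    have hmem : ∀ p : (ℝ × X) × (ℝ × X), p ∈ Prod.swap '' W ↔ Prod.swap p ∈ W := by
      intro p
      rw [Set.image_swap_eq_preimage_swap]
      rfl
    refine ⟨⟨r, hr0, fun p hp => ?_⟩, ?_, ?_⟩
    · have := hr (Prod.swap p) ((hmem p).mp hp)
      simpa [abs_sub_comm] using this
    · intro c hc
      obtain ⟨M, hM, hMm⟩ := hQ' c hc
      refine ⟨M, hM, fun x a hxa hx => ?_⟩
      exact hMm a x ((hmem (x, a)).mp hxa) hx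
    · intro c hc
      obtain ⟨M, hM, hMm⟩ := hQ c hc
      refine ⟨M, hM, fun a x hax hx => ?_⟩
      exact hMm x a ((hmem (a, x)).mp hax) hx
  | comp W W' h h' ih ih' =>
    obtain ⟨⟨r₁, hr₁0, hr₁⟩, hQ₁, hQ₁'⟩ := ih
    obtain ⟨⟨r₂, hr₂0, hr₂⟩, hQ₂, hQ₂'⟩ := ih'
    refine ⟨⟨r₁ + r₂, add_nonneg hr₁0 hr₂0, fun p hp => ?_⟩, ?_, ?_⟩
    · obtain ⟨z, h1, h2⟩ := hp
      have b1 := hr₁ (p.1, z) h1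
      have b2 := hr₂ (z, p.2) h2
      calc |p.1.1 - p.2.1| ≤ |p.1.1 - z.1| + |z.1 - p.2.1| := abs_sub_le _ _ _
        _ ≤ r₁ + r₂ := add_le_add b1 b2
    · intro c hc
      obtain ⟨M₂, hM₂, hMm₂⟩ := hQ₂ (c + r₁) (by linarith)
      obtain ⟨M₁, hM₁, hMm₁⟩ := hQ₁ c hc
      refine ⟨SetRel.comp W M₂ ∪ M₁,
        GenCoarse.union _ _ (GenCoarse.comp _ _ h hM₂) hM₁, fun x a hxa hx => ?_⟩
      obtain ⟨z, h1, h2⟩ := hxa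
      have hb := abs_le.mp (hr₁ (x, z) h1)
      have hx' := abs_le.mp hx
      have hz : |z.1| ≤ c + r₁ := by
        rw [abs_le]
        constructor
        · have : -r₁ ≤ x.1 - z.1 := hb.1
          linarith [hx'.1]
        · have : x.1 - z.1 ≤ r₁ := hb.2
          linarith [hx'.2]
      rcases hMm₂ z a h2 hz with hm | hz'
      · exact Or.inl (Set.mem_union_left _ ⟨z, h1, hm⟩)
      · subst hz'
        exact (hMm₁ x z h1 hx).imp (Set.mem_union_right _) id
    · intro c hc
      obtain ⟨M₁, hM₁, hMm₁⟩ := hQ₁' (c + r₂) (by linarith)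
      obtain ⟨M₂, hM₂, hMm₂⟩ := hQ₂' c hc
      refine ⟨SetRel.comp (Prod.swap '' W') M₁ ∪ M₂,
        GenCoarse.union _ _ (GenCoarse.comp _ _ (GenCoarse.inv _ h') hM₁) hM₂,
        fun a x hax hx => ?_⟩
      obtain ⟨z, h1, h2⟩ := hax
      have hb := abs_le.mp (hr₂ (z, x) h2)
      have hx' := abs_le.mp hx
      have hz : |z.1| ≤ c + r₂ := by
        rw [abs_le]
        constructor
        · have : z.1 - x.1 ≤ r₂ := hb.2
          linarith [hx'.1]
        · have : -r₂ ≤ z.1 - x.1 := hb.1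
          linarith [hx'.2]
      rcases hMm₁ a z h1 hz with hm | hz'
      · refine Or.inl (Set.mem_union_left _ ⟨z, ?_, hm⟩)
        exact ⟨(z, x), h2, rfl⟩
      · subst hz'
        exact (hMm₂ z x h2 hx).imp (Set.mem_union_right _) id

/-- The pair `((−∞,0] × X, [0,∞) × X)` is a coarsely excisive decomposition of the
hybrid space `O(X)_-`. -/
theorem stmt16 {X : Type*} [UniformSpace X] (CX : Set (Set (X × X))) :
    ((Set.Iic (0 : ℝ) ×ˢ (Set.univ : Set X)) ∪
      (Set.Ici (0 : ℝ) ×ˢ (Set.univ : Set X)) = Set.univ) ∧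
    ∀ W : Set ((ℝ × X) × (ℝ × X)), GenCoarse (hybridBase X CX) W →
      ∃ W' : Set ((ℝ × X) × (ℝ × X)), GenCoarse (hybridBase X CX) W' ∧
        relImage W (Set.Iic (0 : ℝ) ×ˢ (Set.univ : Set X)) ∩
            relImage W (Set.Ici (0 : ℝ) ×ˢ (Set.univ : Set X)) ⊆
          relImage W' ({(0 : ℝ)} ×ˢ (Set.univ : Set X)) := by
  constructor
  · ext p
    simp only [Set.mem_union, Set.mem_prod, Set.mem_Iic, Set.mem_Ici, Set.mem_univ,
      and_true, iff_true]
    exact le_total p.1 0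
  · intro W hW
    obtain ⟨⟨r, hr0, hr⟩, hQ, -⟩ := key hW
    obtain ⟨W', hW', hP⟩ := hQ r hr0
    refine ⟨W' ∪ Set.diagonal _, GenCoarse.union _ _ hW' GenCoarse.diag, ?_⟩
    rintro x ⟨⟨a, haA, hxa⟩, ⟨b, hbB, hxb⟩⟩
    have ha1 : a.1 ≤ 0 := haA.1
    have hb1 : (0 : ℝ) ≤ b.1 := hbB.1
    have hba := abs_le.mp (hr (x, a) hxa)
    have hbb := abs_le.mp (hr (x, b) hxb)
    have hxr : |x.1| ≤ r := by
      rw [abs_le]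
      constructor
      · have : -r ≤ x.1 - b.1 := hbb.1
        linarith
      · have : x.1 - a.1 ≤ r := hba.2
        linarith
    rcases hP x a hxa hxr with hm | hxa'
    · exact ⟨((0 : ℝ), a.2), ⟨rfl, trivial⟩, Set.mem_union_left _ hm⟩
    · rcases hP x b hxb hxr with hm | hxb'
      · exact ⟨((0 : ℝ), b.2), ⟨rfl, trivial⟩, Set.mem_union_left _ hm⟩
      · have hx0 : x.1 = 0 := le_antisymm (hxa' ▸ ha1) (hxb' ▸ hb1)
        exact ⟨x, ⟨hx0, trivial⟩, Set.mem_union_right _ rfl⟩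
end
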